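/- arXiv:1902.03391 — 3 statements merged into one kernel-verified Lean document; each statement's English description precedes it below -/
import Mathlib

section
/- Let l ≥ 3 and n = 2^l − 1. Then dil(F_n, HT(l)) = l − 1: every bijection from the vertices of the fan F_n to the vertices of the hypertree HT(l) has some edge of F_n whose endpoint images are at distance at least l − 1 in HT(l), and there exists a bijection under which every edge of F_n maps to a pair of vertices at distance at most l − 1 in HT(l). -/
open SimpleGraph

/-- Fan graph on `Fin n`: core `0`, path `1, …, n-1`. -/
def fanGraph (n : ℕ) : SimpleGraph (Fin n) where
  Adj x y := x ≠ y ∧ (x.val = 0 ∨ y.val = 0 ∨ y.val = x.val + 1 ∨ x.val = y.val + 1)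
  symm := by constructor; rintro x y ⟨h1, h2⟩; exact ⟨h1.symm, by tauto⟩
  loopless := by constructor; rintro x ⟨h1, -⟩; exact h1 rfl

/-- Adjacency of hypertree labels (1-based): binary tree edges plus horizontal
edges between labels on the same level `i ≥ 2` differing by `2^(i-2)`.
The level of label `a` is `Nat.log 2 a + 1`. -/
def htAdjLbl (a b : ℕ) : Prop :=
  (b = 2 * a ∨ b = 2 * a + 1 ∨ a = 2 * b ∨ a = 2 * b + 1) ∨
  (a ≠ b ∧ Nat.log 2 a = Nat.log 2 b ∧ 1 ≤ Nat.log 2 a ∧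
    max a b - min a b = 2 ^ (Nat.log 2 a - 1))

/-- The hypertree `HT(l)` on `Fin (2^l - 1)`; vertex `x` has label `x+1`. -/
def hypertree (l : ℕ) : SimpleGraph (Fin (2 ^ l - 1)) where
  Adj x y := htAdjLbl (x.val + 1) (y.val + 1)
  symm := by
    constructor
    rintro x y (h | ⟨hne, hlog, hge, hdiff⟩)
    · left; tauto
    · right
      refine ⟨hne.symm, hlog.symm, ?_, ?_⟩
      · rw [← hlog]; exact hge
      · rw [max_comm, min_comm, ← hlog]; exact hdiff
  loopless := by
    constructor
    rintro x (h | ⟨hne, -⟩)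
    · omega
    · exact hne rfl

/-!
Lower bound: `leftLeafPotential` changes by at most one along every edge of `HT(l)`, vanishes at
the leftmost leaf and equals `2l - 3` at the rightmost leaf, so the two leaves are at distance at
least `2l - 3`. Wherever the core of the fan goes, one of these leaves is then at distance at least
`l - 1` from its image, and the core is adjacent to everything.

Upper bound: send the core to the root and the path to the postorder traversal of the left subtree
followed by that of the right subtree. Consecutive labels in the postorder traversal of a subtree of
depth `d` are at distance at most `d + 1`, the two traversals are joined through the horizontal
edge between `2` and `3`, and every vertex is within `l - 1` of the root.
-/

namespace SimpleGraph

variable {V : Type*} {G : SimpleGraph V}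

theorem Walk.apply_le_apply_add_length (f : V → ℕ) (hf : ∀ u v, G.Adj u v → f u ≤ f v + 1)
    {x y : V} (w : G.Walk x y) : f x ≤ f y + w.length := by
  induction w with
  | nil => simp
  | cons h _ ih => rw [Walk.length_cons]; linarith [hf _ _ h]

theorem Reachable.apply_le_apply_add_dist (f : V → ℕ)
    (hf : ∀ u v, G.Adj u v → f u ≤ f v + 1) {x y : V} (h : G.Reachable x y) :
    f x ≤ f y + G.dist x y := by
  obtain ⟨w, hw⟩ := h.exists_walk_length_eq_dist
  exact hw ▸ w.apply_le_apply_add_length f hf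

end SimpleGraph

section Fan

variable {V : Type*} {H : SimpleGraph V}

theorem exists_fanGraph_adj_le_dist (hH : H.Connected) {n k : ℕ} (hk : 0 < k) {a b : V}
    (hab : 2 * k ≤ H.dist a b + 1) (f : Fin n ≃ V) :
    ∃ u v, (fanGraph n).Adj u v ∧ k ≤ H.dist (f u) (f v) := by
  let core : Fin n := ⟨0, (f.symm a).pos⟩
  suffices key : ∀ t, k ≤ H.dist (f core) t →
      ∃ u v, (fanGraph n).Adj u v ∧ k ≤ H.dist (f u) (f v) by
    have := hH.dist_triangle (u := a) (v := f core) (w := b)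
    have := H.dist_comm (u := a) (v := f core)
    by_cases ha : k ≤ H.dist (f core) a
    · exact key a ha
    · exact key b (by omega)
  intro t ht
  have hne : core ≠ f.symm t := by
    intro h
    rw [h, f.apply_symm_apply, SimpleGraph.dist_self] at ht
    omega
  exact ⟨core, f.symm t, ⟨hne, Or.inl rfl⟩, by rwa [f.apply_symm_apply]⟩

theorem exists_equiv_fanGraph_dist_le [Fintype V] {n k : ℕ} (hcard : Fintype.card V = n)
    (c : V) (L : List V) (hnd : (c :: L).Nodup) (hlen : L.length + 1 = n)
    (hcore : ∀ v ∈ L, H.dist c v ≤ k) (hchain : L.IsChain fun u v => H.dist u v ≤ k) :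
    ∃ f : Fin n ≃ V, ∀ u v, (fanGraph n).Adj u v → H.dist (f u) (f v) ≤ k := by
  subst hlen
  have hcore' : ∀ v ∈ c :: L, H.dist c v ≤ k := by
    rintro v (_ | ⟨_, hv⟩)
    · simp
    · exact hcore v hv
  have hchain' : (c :: L).IsChain fun u v => H.dist u v ≤ k := by
    cases L with
    | nil => exact List.isChain_singleton c
    | cons b L => exact List.isChain_cons_cons.mpr ⟨hcore b (by simp), hchain⟩
  let g : Fin (L.length + 1) → V := fun i => (c :: L)[i.val]
  have hg : Function.Injective g := fun i j hij => Fin.ext (hnd.getElem_inj_iff.mp hij)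
  have hpath : ∀ i j : Fin (L.length + 1), j.val = i.val + 1 → H.dist (g i) (g j) ≤ k := by
    rintro i ⟨j, hj⟩ rfl
    exact List.isChain_iff_getElem.mp hchain' i hj
  refine ⟨Equiv.ofBijective g
    ((Fintype.bijective_iff_injective_and_card g).mpr ⟨hg, by simp [hcard]⟩), ?_⟩
  rintro ⟨u, hu⟩ ⟨v, hv⟩ ⟨-, rfl | rfl | huv | hvu⟩
  · exact hcore' _ (List.getElem_mem _)
  · rw [SimpleGraph.dist_comm]; exact hcore' _ (List.getElem_mem _)
  · exact hpath _ _ huv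
  · rw [SimpleGraph.dist_comm]; exact hpath _ _ hvu

end Fan

theorem Nat.div_two_pow_log_eq_one {a : ℕ} (ha : a ≠ 0) : a / 2 ^ Nat.log 2 a = 1 := by
  have hlo := Nat.pow_log_le_self 2 ha
  have hhi := Nat.lt_pow_succ_log_self one_lt_two a
  rw [pow_succ] at hhi
  exact Nat.div_eq_of_lt_le (by omega) (by omega)

/-- The vertex labelled `a`, i.e. `a - 1`; clamped, so only meaningful for `1 ≤ a < 2 ^ l`. -/
def htVertex {l : ℕ} (hl : l ≠ 0) (a : ℕ) : Fin (2 ^ l - 1) :=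
  ⟨min (a - 1) (2 ^ l - 2), by have := Nat.one_lt_two_pow hl; omega⟩

section HypertreeVertex

variable {l : ℕ} (hl : l ≠ 0)

theorem htVertex_val {a : ℕ} (ha : a < 2 ^ l) : (htVertex hl a).val = a - 1 := by
  simp only [htVertex]; omega

theorem htVertex_val_add_one (x : Fin (2 ^ l - 1)) : htVertex hl (x.val + 1) = x :=
  Fin.ext (by rw [htVertex_val hl (by omega)]; omega)

theorem hypertree_adj_htVertex {a b : ℕ} (ha : 0 < a) (hb : 0 < b) (ha' : a < 2 ^ l)
    (hb' : b < 2 ^ l) (h : htAdjLbl a b) : (hypertree l).Adj (htVertex hl a) (htVertex hl b) := by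
  change htAdjLbl _ _
  rwa [htVertex_val hl ha', htVertex_val hl hb', Nat.sub_add_cancel ha, Nat.sub_add_cancel hb]

theorem exists_walk_htVertex_div_two_pow {a : ℕ} (ha : a < 2 ^ l) :
    ∀ e, 0 < a / 2 ^ e →
      ∃ w : (hypertree l).Walk (htVertex hl a) (htVertex hl (a / 2 ^ e)), w.length ≤ e
  | 0, _ => ⟨Walk.nil.copy rfl (by rw [pow_zero, Nat.div_one]), by simp⟩
  | e + 1, he => by
    have hdiv : a / 2 ^ (e + 1) = a / 2 ^ e / 2 := by rw [pow_succ, Nat.div_div_eq_div_mul]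
    rw [hdiv] at he ⊢
    obtain ⟨w, hw⟩ := exists_walk_htVertex_div_two_pow ha e (by omega)
    have hle : a / 2 ^ e < 2 ^ l := (Nat.div_le_self _ _).trans_lt ha
    have hadj := hypertree_adj_htVertex hl (a := a / 2 ^ e) (b := a / 2 ^ e / 2) (by omega) he
      hle (by omega) (Or.inl (by omega))
    exact ⟨w.concat hadj, by simpa using hw⟩

theorem hypertree_dist_htVertex_div_two_pow_le {a e : ℕ} (ha : a < 2 ^ l) (he : 0 < a / 2 ^ e) :
    (hypertree l).dist (htVertex hl a) (htVertex hl (a / 2 ^ e)) ≤ e := by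
  obtain ⟨w, hw⟩ := exists_walk_htVertex_div_two_pow hl ha e he
  exact (dist_le w).trans hw

theorem hypertree_dist_htVertex_le_log {a : ℕ} (ha0 : a ≠ 0) (ha : a < 2 ^ l) :
    (hypertree l).dist (htVertex hl a) (htVertex hl 1) ≤ Nat.log 2 a := by
  have hdiv := Nat.div_two_pow_log_eq_one ha0
  simpa [hdiv] using hypertree_dist_htVertex_div_two_pow_le hl ha (e := Nat.log 2 a) (by omega)

theorem hypertree_connected (hl : l ≠ 0) : (hypertree l).Connected := by
  have hroot : ∀ x, (hypertree l).Reachable x (htVertex hl 1) := fun x => by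
    obtain ⟨w, -⟩ := exists_walk_htVertex_div_two_pow hl (a := x.val + 1)
      (by have := x.isLt; omega) (Nat.log 2 (x.val + 1))
      (by rw [Nat.div_two_pow_log_eq_one (by omega)]; omega)
    rw [Nat.div_two_pow_log_eq_one (by omega), htVertex_val_add_one] at w
    exact ⟨w⟩
  exact (connected_iff _).mpr ⟨fun x y => (hroot x).trans (hroot y).symm, ⟨htVertex hl 1⟩⟩

theorem hypertree_dist_htVertex_le_add {a b e : ℕ} (hb : b < 2 ^ l)
    (he : 0 < b / 2 ^ e) :
    (hypertree l).dist (htVertex hl a) (htVertex hl b) ≤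
      (hypertree l).dist (htVertex hl a) (htVertex hl (b / 2 ^ e)) + e := by
  have := (hypertree_connected hl).dist_triangle (u := htVertex hl a)
    (v := htVertex hl (b / 2 ^ e)) (w := htVertex hl b)
  rw [SimpleGraph.dist_comm (u := htVertex hl (b / 2 ^ e))] at this
  have := hypertree_dist_htVertex_div_two_pow_le hl hb he
  omega

theorem hypertree_dist_htVertex_two_mul_add_le {x b : ℕ} (hb : b ≤ 1)
    (hx : 0 < x) (hlt : 2 * x + b < 2 ^ l) :
    (hypertree l).dist (htVertex hl (2 * x + b)) (htVertex hl x) ≤ 1 := by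
  simpa [show (2 * x + b) / 2 = x by omega] using
    hypertree_dist_htVertex_div_two_pow_le hl hlt (e := 1) (by omega)

end HypertreeVertex

theorem Nat.size_two_mul_add {r b : ℕ} (hb : b ≤ 1) (h : 2 * r + b ≠ 0) :
    (2 * r + b).size = r.size + 1 := by
  interval_cases b
  · simpa [Nat.bit_val] using Nat.size_bit (b := false) (n := r) (by simpa [Nat.bit_val] using h)
  · simpa [Nat.bit_val] using Nat.size_bit (b := true) (n := r) (by simp [Nat.bit_val])

theorem Nat.size_two_pow_sub_one (n : ℕ) : (2 ^ n - 1).size = n := by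
  refine le_antisymm (Nat.size_le.mpr (by have := Nat.one_le_two_pow (n := n); omega)) ?_
  rcases n with _ | n
  · exact Nat.zero_le _
  · exact Nat.lt_size.mpr (by rw [pow_succ]; have := Nat.one_le_two_pow (n := n); omega)

theorem Nat.log_two_pow_mul_add {s c r : ℕ} (hc : c ≤ 1) (hr : r < 2 ^ s) :
    Nat.log 2 (2 ^ s * (2 + c) + r) = s + 1 := by
  refine Nat.log_eq_of_pow_le_of_lt_pow ?_ ?_ <;> rw [pow_succ]
  · nlinarith
  · rw [pow_succ]; nlinarith

theorem Nat.exists_eq_two_pow_mul_add {a : ℕ} (ha : 2 ≤ a) :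
    ∃ c r, c ≤ 1 ∧ r < 2 ^ (Nat.log 2 a - 1) ∧ a = 2 ^ (Nat.log 2 a - 1) * (2 + c) + r := by
  have hlog : 1 ≤ Nat.log 2 a := Nat.log_pos one_lt_two ha
  have hlo := Nat.pow_log_le_self 2 (show a ≠ 0 by omega)
  have hhi := Nat.lt_pow_succ_log_self one_lt_two a
  obtain ⟨s, hs⟩ : ∃ s, Nat.log 2 a = s + 1 := ⟨_, (Nat.sub_add_cancel hlog).symm⟩
  rw [hs, pow_succ] at hlo hhi
  rw [pow_succ] at hhi
  have hpos : 0 < 2 ^ s := Nat.two_pow_pos s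
  have hq : 2 ≤ a / 2 ^ s ∧ a / 2 ^ s < 4 :=
    ⟨(Nat.le_div_iff_mul_le hpos).mpr (by linarith),
      (Nat.div_lt_iff_lt_mul hpos).mpr (by linarith)⟩
  refine ⟨a / 2 ^ s - 2, a % 2 ^ s, by omega, hs ▸ Nat.mod_lt _ hpos, ?_⟩
  rw [hs, Nat.add_sub_cancel, Nat.add_sub_cancel' hq.1]
  exact (Nat.div_add_mod a _).symm

/-- For a label `a = 2 ^ s * (2 + c) + r ≥ 2` with `c ≤ 1` and `r < 2 ^ s` this is
`(l - 2 - s) + c + 2 * r.size`, the length of a walk from `a` to the leftmost leaf `2 ^ (l - 1)`: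
climb `r.size` levels to clear the bits of `r`, cross the horizontal edge if `c = 1`, then descend
through left children. -/
def leftLeafPotential (l a : ℕ) : ℕ :=
  if a < 2 then l - 1 else
    (l - 1 - Nat.log 2 a) + (a / 2 ^ (Nat.log 2 a - 1) - 2) + 2 * (a % 2 ^ (Nat.log 2 a - 1)).size

theorem leftLeafPotential_eq (l : ℕ) {s c r : ℕ} (hc : c ≤ 1) (hr : r < 2 ^ s) :
    leftLeafPotential l (2 ^ s * (2 + c) + r) = (l - 2 - s) + c + 2 * r.size := by
  have hpos : 0 < 2 ^ s := Nat.two_pow_pos s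
  rw [leftLeafPotential, if_neg (by nlinarith), Nat.log_two_pow_mul_add hc hr, Nat.add_sub_cancel,
    Nat.mul_add_div hpos, Nat.div_eq_of_lt hr, Nat.mul_add_mod, Nat.mod_eq_of_lt hr]
  omega

theorem leftLeafPotential_two_mul_add {l a b : ℕ} (ha : 0 < a) (hb : b ≤ 1)
    (hlt : 2 * a + b < 2 ^ l) :
    leftLeafPotential l a ≤ leftLeafPotential l (2 * a + b) + 1 ∧
      leftLeafPotential l (2 * a + b) ≤ leftLeafPotential l a + 1 := by
  rcases (show a = 1 ∨ 2 ≤ a by omega) with rfl | ha2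
  · have hl : 2 ≤ l := (Nat.pow_lt_pow_iff_right one_lt_two).mp (by rw [pow_one]; omega)
    have h := leftLeafPotential_eq l (s := 0) hb (Nat.two_pow_pos 0)
    rw [pow_zero, one_mul, add_zero] at h
    rw [show 2 * 1 + b = 2 + b by ring, h, leftLeafPotential, if_pos one_lt_two]
    simp only [Nat.size_zero]
    omega
  · obtain ⟨c, r, hc, hr, hdec⟩ := Nat.exists_eq_two_pow_mul_add ha2
    set s := Nat.log 2 a - 1
    have hdec' : 2 * a + b = 2 ^ (s + 1) * (2 + c) + (2 * r + b) := by rw [hdec, pow_succ]; ring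
    have hr' : 2 * r + b < 2 ^ (s + 1) := by rw [pow_succ]; omega
    have hsl : s + 2 < l := by
      refine (Nat.pow_lt_pow_iff_right one_lt_two).mp (lt_of_le_of_lt ?_ hlt)
      rw [hdec', pow_succ, pow_succ]; nlinarith
    rw [hdec', leftLeafPotential_eq l hc hr', hdec, leftLeafPotential_eq l hc hr]
    rcases Nat.eq_zero_or_pos (2 * r + b) with h0 | hpos
    · obtain rfl : r = 0 := by omega
      rw [h0]; simp only [Nat.size_zero]; omega
    · rw [Nat.size_two_mul_add hb hpos.ne']; omega

theorem leftLeafPotential_horizontal (l : ℕ) {a b : ℕ} (hab : a < b)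
    (hlog : Nat.log 2 a = Nat.log 2 b) (ht : 1 ≤ Nat.log 2 a)
    (hd : b - a = 2 ^ (Nat.log 2 a - 1)) :
    leftLeafPotential l b = leftLeafPotential l a + 1 := by
  have ha2 : 2 ≤ a := by
    by_contra h
    rw [Nat.log_of_lt (by omega)] at ht
    omega
  obtain ⟨c, r, hc, hr, hdec⟩ := Nat.exists_eq_two_pow_mul_add ha2
  set s := Nat.log 2 a - 1
  have hb : b < 2 ^ s * 4 := by
    have := Nat.lt_pow_succ_log_self one_lt_two b
    rwa [← hlog, show (Nat.log 2 a).succ = s + 2 by omega, pow_add] at this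
  obtain rfl : c = 0 := by
    have : b = a + 2 ^ s := by omega
    nlinarith
  rw [show b = 2 ^ s * (2 + 1) + r by omega, hdec, leftLeafPotential_eq l le_rfl hr,
    leftLeafPotential_eq l (Nat.zero_le 1) hr]
  ring

theorem leftLeafPotential_le_of_htAdjLbl {l a b : ℕ} (ha : 0 < a) (hb : 0 < b) (ha' : a < 2 ^ l)
    (hb' : b < 2 ^ l) (h : htAdjLbl a b) : leftLeafPotential l a ≤ leftLeafPotential l b + 1 := by
  rcases h with (rfl | rfl | rfl | rfl) | ⟨hne, hlog, ht, hd⟩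
  · simpa using (leftLeafPotential_two_mul_add (b := 0) ha zero_le_one (by omega)).1
  · exact (leftLeafPotential_two_mul_add ha le_rfl hb').1
  · simpa using (leftLeafPotential_two_mul_add (b := 0) hb zero_le_one (by omega)).2
  · exact (leftLeafPotential_two_mul_add hb le_rfl ha').2
  · rcases lt_or_gt_of_ne hne with hab | hab
    · rw [max_eq_right hab.le, min_eq_left hab.le] at hd
      have := leftLeafPotential_horizontal l hab hlog ht hd
      omega
    · rw [max_eq_left hab.le, min_eq_right hab.le, hlog] at hd
      rw [hlog] at ht
      have := leftLeafPotential_horizontal l hab hlog.symm ht hd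
      omega

theorem leftLeafPotential_leftmost_leaf {l : ℕ} (hl : 2 ≤ l) :
    leftLeafPotential l (2 ^ (l - 1)) = 0 := by
  have h := leftLeafPotential_eq l (s := l - 2) (c := 0) (Nat.zero_le 1) (Nat.two_pow_pos _)
  rw [show 2 ^ (l - 2) * (2 + 0) + 0 = 2 ^ (l - 1) by
    rw [add_zero, add_zero, ← pow_succ]; congr 1; omega] at h
  simpa using h

theorem leftLeafPotential_rightmost_leaf {l : ℕ} (hl : 2 ≤ l) :
    leftLeafPotential l (2 ^ l - 1) = 2 * l - 3 := by
  have hpow : 2 ^ l = 2 ^ (l - 2) * 4 := (pow_sub_mul_pow 2 hl).symm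
  have hpos := Nat.one_le_two_pow (n := l - 2)
  have h := leftLeafPotential_eq l (s := l - 2) (c := 1) (r := 2 ^ (l - 2) - 1) le_rfl (by omega)
  rw [show 2 ^ (l - 2) * (2 + 1) + (2 ^ (l - 2) - 1) = 2 ^ l - 1 by omega,
    Nat.size_two_pow_sub_one] at h
  omega

theorem hypertree_two_mul_sub_three_le_dist {l : ℕ} (hl : 2 ≤ l) :
    2 * l - 3 ≤ (hypertree l).dist (htVertex (by omega) (2 ^ (l - 1)))
      (htVertex (by omega) (2 ^ l - 1)) := by
  have hl0 : l ≠ 0 := by omega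
  have hpot := ((hypertree_connected hl0).preconnected (htVertex hl0 (2 ^ l - 1))
    (htVertex hl0 (2 ^ (l - 1)))).apply_le_apply_add_dist (fun x => leftLeafPotential l (x.val + 1))
    (fun u v h => leftLeafPotential_le_of_htAdjLbl (Nat.succ_pos _) (Nat.succ_pos _)
      (by have := u.isLt; omega) (by have := v.isLt; omega) h)
  have hlt : 2 ^ (l - 1) < 2 ^ l := Nat.pow_lt_pow_right one_lt_two (by omega)
  have hpos := Nat.one_le_two_pow (n := l - 1)
  simp only [htVertex_val hl0 hlt, htVertex_val hl0 (show 2 ^ l - 1 < 2 ^ l by omega)] at hpot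
  rw [Nat.sub_add_cancel (by omega), Nat.sub_add_cancel (by omega),
    leftLeafPotential_leftmost_leaf hl, leftLeafPotential_rightmost_leaf hl] at hpot
  rwa [zero_add, SimpleGraph.dist_comm] at hpot

def subtreePostorder : ℕ → ℕ → List ℕ
  | 0, x => [x]
  | d + 1, x => subtreePostorder d (2 * x) ++ (subtreePostorder d (2 * x + 1) ++ [x])

theorem length_subtreePostorder (d x : ℕ) : (subtreePostorder d x).length = 2 ^ (d + 1) - 1 := by
  induction d generalizing x with
  | zero => rfl
  | succ d ih =>
    simp only [subtreePostorder, List.length_append, ih, List.length_singleton]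
    have := Nat.one_le_two_pow (n := d + 1)
    rw [pow_succ 2 (d + 1)]
    omega

theorem head?_subtreePostorder (d x : ℕ) : (subtreePostorder d x).head? = some (2 ^ d * x) := by
  induction d generalizing x with
  | zero => simp [subtreePostorder]
  | succ d ih =>
    rw [subtreePostorder, List.head?_append, ih, pow_succ, mul_assoc]
    rfl

theorem getLast?_subtreePostorder (d x : ℕ) : (subtreePostorder d x).getLast? = some x := by
  cases d <;> simp [subtreePostorder]

theorem exists_div_two_pow_eq_of_mem_subtreePostorder {d x y : ℕ}
    (hy : y ∈ subtreePostorder d x) : ∃ e ≤ d, y / 2 ^ e = x := by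
  induction d generalizing x with
  | zero => exact ⟨0, le_rfl, by simp_all [subtreePostorder]⟩
  | succ d ih =>
    simp only [subtreePostorder, List.mem_append, List.mem_singleton] at hy
    rcases hy with hy | hy | rfl
    · obtain ⟨e, he, hdiv⟩ := ih hy
      exact ⟨e + 1, by omega, by rw [pow_succ, ← Nat.div_div_eq_div_mul, hdiv]; omega⟩
    · obtain ⟨e, he, hdiv⟩ := ih hy
      exact ⟨e + 1, by omega, by rw [pow_succ, ← Nat.div_div_eq_div_mul, hdiv]; omega⟩
    · exact ⟨0, by omega, by simp⟩

theorem mem_subtreePostorder_bounds {l d x y : ℕ} (hx : 0 < x) (hfit : 2 ^ d * (x + 1) ≤ 2 ^ l)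
    (hy : y ∈ subtreePostorder d x) : 0 < y ∧ y < 2 ^ l := by
  obtain ⟨e, he, rfl⟩ := exists_div_two_pow_eq_of_mem_subtreePostorder hy
  have hlt : y < (y / 2 ^ e + 1) * 2 ^ e :=
    Nat.lt_mul_of_div_lt (Nat.lt_succ_self _) (Nat.two_pow_pos e)
  have hde : 2 ^ e ≤ 2 ^ d := Nat.pow_le_pow_right two_pos he
  refine ⟨Nat.pos_of_ne_zero fun h => by simp [h] at hx, ?_⟩
  nlinarith

theorem Nat.div_two_pow_ne_two_mul_add_one {x y e f : ℕ} (hx : 0 < x) (he : y / 2 ^ e = 2 * x) :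
    y / 2 ^ f ≠ 2 * x + 1 := by
  intro hf
  rcases le_total e f with h | h
  · obtain ⟨k, rfl⟩ := Nat.exists_eq_add_of_le h
    rw [pow_add, ← Nat.div_div_eq_div_mul, he] at hf
    rcases k with _ | k
    · omega
    · have := Nat.div_le_div_left (a := 2 * x) (Nat.le_self_pow (Nat.add_one_ne_zero k) 2) two_pos
      omega
  · obtain ⟨k, rfl⟩ := Nat.exists_eq_add_of_le h
    rw [pow_add, ← Nat.div_div_eq_div_mul, hf] at he
    rcases k with _ | k
    · omega
    · have := Nat.div_le_div_left (a := 2 * x + 1)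
        (Nat.le_self_pow (Nat.add_one_ne_zero k) 2) two_pos
      omega

theorem nodup_subtreePostorder (d : ℕ) {x : ℕ} (hx : 0 < x) : (subtreePostorder d x).Nodup := by
  induction d generalizing x with
  | zero => simp [subtreePostorder]
  | succ d ih =>
    have hroot : x ∉ subtreePostorder d (2 * x + 1) := fun h => by
      obtain ⟨e, -, he⟩ := exists_div_two_pow_eq_of_mem_subtreePostorder h
      have := Nat.div_le_self x (2 ^ e)
      omega
    refine (ih (by omega)).append ((ih (by omega)).append (List.nodup_singleton x) ?_) ?_
    · simpa using hroot
    · intro y hy hy'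
      obtain ⟨e, -, he⟩ := exists_div_two_pow_eq_of_mem_subtreePostorder hy
      rcases List.mem_append.mp hy' with hy' | hy'
      · obtain ⟨f, -, hf⟩ := exists_div_two_pow_eq_of_mem_subtreePostorder hy'
        exact Nat.div_two_pow_ne_two_mul_add_one hx he hf
      · rw [List.mem_singleton.mp hy'] at he
        have := Nat.div_le_self x (2 ^ e)
        omega

theorem isChain_subtreePostorder {l : ℕ} (hl : l ≠ 0) (d : ℕ) {x : ℕ} (hx : 0 < x)
    (hfit : 2 ^ d * (x + 1) ≤ 2 ^ l) :
    (subtreePostorder d x).IsChain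
      fun a b => (hypertree l).dist (htVertex hl a) (htVertex hl b) ≤ d + 1 := by
  induction d generalizing x with
  | zero => exact List.isChain_singleton x
  | succ d ih =>
    have hd := Nat.one_le_two_pow (n := d)
    rw [pow_succ] at hfit
    have hfit' : 2 ^ d * (2 * x + 1 + 1) ≤ 2 ^ l := by linarith
    have hfit'' : 2 ^ d * (2 * x + 1) ≤ 2 ^ l := by nlinarith
    have hroot : (2 ^ d * (2 * x + 1)) / 2 ^ (d + 1) = x := by
      rw [pow_succ, Nat.mul_div_mul_left _ _ (Nat.two_pow_pos d)]; omega
    have hlt : 2 ^ d * (2 * x + 1) < 2 ^ l := by nlinarith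
    rw [subtreePostorder, List.isChain_append, List.isChain_append]
    refine ⟨(ih (by omega) hfit'').imp fun _ _ h => by omega,
      ⟨(ih (by omega) hfit').imp fun _ _ h => by omega, List.isChain_singleton x, ?_⟩, ?_⟩
    · simp only [getLast?_subtreePostorder, List.head?_cons, Option.mem_def, Option.some.injEq]
      rintro _ rfl _ rfl
      have := hypertree_dist_htVertex_two_mul_add_le hl le_rfl hx (by nlinarith)
      omega
    · simp only [getLast?_subtreePostorder, List.head?_append, head?_subtreePostorder,
        Option.mem_def, Option.some.injEq, Option.some_or]
      rintro _ rfl _ rfl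
      have hvia := hypertree_dist_htVertex_le_add hl (a := 2 * x) hlt (e := d + 1) (by omega)
      have hstep :=
        hypertree_dist_htVertex_two_mul_add_le hl (b := 0) (Nat.zero_le 1) hx (by nlinarith)
      rw [hroot] at hvia
      rw [add_zero] at hstep
      omega

def hypertreeFanPath (l : ℕ) : List ℕ :=
  subtreePostorder (l - 2) 2 ++ subtreePostorder (l - 2) 3

theorem subtreePostorder_sub_one_one {l : ℕ} (hl : 2 ≤ l) :
    subtreePostorder (l - 1) 1 = hypertreeFanPath l ++ [1] := by
  rw [show l - 1 = l - 2 + 1 by omega, subtreePostorder, hypertreeFanPath, List.append_assoc]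

theorem isChain_hypertreeFanPath {l : ℕ} (hl : 2 ≤ l) :
    (hypertreeFanPath l).IsChain fun a b =>
      (hypertree l).dist (htVertex (by omega) a) (htVertex (by omega) b) ≤ l - 1 := by
  have hl0 : l ≠ 0 := by omega
  have hpow : 2 ^ l = 2 ^ (l - 2) * 4 := (pow_sub_mul_pow 2 hl).symm
  have hsub : ∀ x, 0 < x → x < 4 → (subtreePostorder (l - 2) x).IsChain
      fun a b => (hypertree l).dist (htVertex hl0 a) (htVertex hl0 b) ≤ l - 1 := fun x hx hx4 =>
    have hfit : 2 ^ (l - 2) * (x + 1) ≤ 2 ^ l := hpow ▸ Nat.mul_le_mul_left _ (by omega)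
    (isChain_subtreePostorder hl0 (l - 2) hx hfit).imp fun _ _ h => by omega
  rw [hypertreeFanPath, List.isChain_append]
  refine ⟨hsub 2 (by omega) (by omega), hsub 3 (by omega) (by omega), ?_⟩
  simp only [getLast?_subtreePostorder, head?_subtreePostorder, Option.mem_def, Option.some.injEq]
  rintro _ rfl _ rfl
  have hdiv : 2 ^ (l - 2) * 3 / 2 ^ (l - 2) = 3 := Nat.mul_div_cancel_left _ (Nat.two_pow_pos _)
  have hlt : 2 ^ (l - 2) * 3 < 2 ^ l := by rw [hpow]; have := Nat.two_pow_pos (l - 2); omega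
  have hvia := hypertree_dist_htVertex_le_add hl0 (a := 2) hlt (e := l - 2) (by rw [hdiv]; omega)
  have hadj : (hypertree l).dist (htVertex hl0 2) (htVertex hl0 3) = 1 :=
    dist_eq_one_iff_adj.mpr (hypertree_adj_htVertex hl0 two_pos three_pos (by omega) (by omega)
      (Or.inr ⟨by decide, by decide, by decide, by decide⟩))
  rw [hdiv, hadj] at hvia
  omega

theorem exists_equiv_fanGraph_hypertree_dist_le {l : ℕ} (hl : 2 ≤ l) :
    ∃ f : Fin (2 ^ l - 1) ≃ Fin (2 ^ l - 1), ∀ u v, (fanGraph (2 ^ l - 1)).Adj u v →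
      (hypertree l).dist (f u) (f v) ≤ l - 1 := by
  have hl0 : l ≠ 0 := by omega
  have hfull := subtreePostorder_sub_one_one hl
  set P := hypertreeFanPath l
  have hperm := List.perm_append_singleton 1 P
  have hbounds : ∀ y ∈ 1 :: P, 0 < y ∧ y < 2 ^ l := fun y hy =>
    mem_subtreePostorder_bounds one_pos
      (by rw [← pow_succ, Nat.sub_add_cancel (by omega)]) (hfull ▸ hperm.mem_iff.mpr hy)
  have hnodup : (1 :: P).Nodup := hperm.nodup_iff.mp (hfull ▸ nodup_subtreePostorder _ one_pos)
  have hlen : P.length + 1 = 2 ^ l - 1 := by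
    have := congrArg List.length hfull
    rw [length_subtreePostorder, List.length_append, List.length_singleton,
      Nat.sub_add_cancel (by omega)] at this
    omega
  refine exists_equiv_fanGraph_dist_le (by simp) (htVertex hl0 1) (P.map (htVertex hl0))
    ?_ (by simpa using hlen) ?_ (List.isChain_map _ |>.mpr (isChain_hypertreeFanPath hl))
  · refine List.map_cons (f := htVertex hl0) ▸ hnodup.map_on fun a ha b hb hab => ?_
    have := congrArg Fin.val hab
    rw [htVertex_val hl0 (hbounds a ha).2, htVertex_val hl0 (hbounds b hb).2] at this
    have := (hbounds a ha).1
    have := (hbounds b hb).1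
    omega
  · simp only [List.mem_map]
    rintro _ ⟨y, hy, rfl⟩
    obtain ⟨hy0, hyl⟩ := hbounds y (List.mem_cons_of_mem 1 hy)
    rw [SimpleGraph.dist_comm]
    have := Nat.log_lt_of_lt_pow hy0.ne' hyl
    exact (hypertree_dist_htVertex_le_log hl0 hy0.ne' hyl).trans (by omega)

theorem dil_fan_hypertree (l n : ℕ) (hl : 3 ≤ l) (hn : n = 2 ^ l - 1) :
    (∀ f : Fin n ≃ Fin (2 ^ l - 1), ∃ u v : Fin n, (fanGraph n).Adj u v ∧
      l - 1 ≤ (hypertree l).dist (f u) (f v)) ∧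
    (∃ f : Fin n ≃ Fin (2 ^ l - 1), ∀ u v : Fin n, (fanGraph n).Adj u v →
      (hypertree l).dist (f u) (f v) ≤ l - 1) := by
  subst hn
  have hdiam := hypertree_two_mul_sub_three_le_dist (l := l) (by omega)
  exact ⟨exists_fanGraph_adj_le_dist (a := htVertex _ (2 ^ (l - 1))) (b := htVertex _ (2 ^ l - 1))
      (hypertree_connected (by omega)) (by omega) (by omega),
    exists_equiv_fanGraph_hypertree_dist_le (by omega)⟩
end

section
/- Let l ≥ 3, n = 2^l − 1 and k = (n−1)/2. Then dil(T_k, HT(l)) = l − 1: every bijection from the vertices of the friendship graph T_k (which has n vertices) to the vertices of the hypertree HT(l) has some edge of T_k whose endpoint images are at distance at least l − 1 in HT(l), and there exists a bijection under which every edge of T_k maps to a pair of vertices at distance at most l − 1 in HT(l). -/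
open SimpleGraph

/-- Friendship graph `T_k` on `Fin (2k+1)`: hub `0` and triangles `(0, 2i-1, 2i)`. -/
def friendshipGraph (k : ℕ) : SimpleGraph (Fin (2 * k + 1)) where
  Adj x y := x ≠ y ∧ (x.val = 0 ∨ y.val = 0 ∨
    (y.val = x.val + 1 ∧ x.val % 2 = 1) ∨ (x.val = y.val + 1 ∧ y.val % 2 = 1))
  symm := by constructor; rintro x y ⟨h1, h2⟩; exact ⟨h1.symm, by tauto⟩
  loopless := by constructor; rintro x ⟨h1, -⟩; exact h1 rfl

/-!
For the upper bound, send the hub to the root and each triangle to the two ends of a horizontal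
edge; every vertex of `HT(l)` lies within distance `l - 1` of the root.

For the lower bound, an integer potential changing by at most one along edges bounds distances
from below. Given the image `w` of the hub, choose the quarter of the tree whose second and third
binary digits differ from those of `w`, and measure the depth positively inside that quarter and
negatively outside it. The potential is `≤ 0` at `w` and `l - 1` at a leaf of the quarter, so that
leaf is at distance at least `l - 1` from `w`.
-/

theorem SimpleGraph.Walk.le_add_length_of_adj {V : Type*} {G : SimpleGraph V} {f : V → ℤ}
    (hf : ∀ x y, G.Adj x y → f y ≤ f x + 1) {u v : V} (p : G.Walk u v) :
    f v ≤ f u + p.length := by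
  induction p with
  | nil => simp
  | cons h _ ih =>
    rw [Walk.length_cons]
    push_cast
    linarith [hf _ _ h]

theorem SimpleGraph.Reachable.le_add_dist_of_adj {V : Type*} {G : SimpleGraph V} {f : V → ℤ}
    (hf : ∀ x y, G.Adj x y → f y ≤ f x + 1) {u v : V} (h : G.Reachable u v) :
    f v ≤ f u + G.dist u v := by
  obtain ⟨p, hp⟩ := h.exists_walk_length_eq_dist
  rw [← hp]
  exact p.le_add_length_of_adj hf

theorem log_two_mul_add {a ε : ℕ} (ha : 1 ≤ a) (hε : ε ≤ 1) :
    Nat.log 2 (2 * a + ε) = Nat.log 2 a + 1 := by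
  rw [Nat.log_of_one_lt_of_le one_lt_two (by omega), show (2 * a + ε) / 2 = a by omega]

theorem hypertree_reachable_dist_le {l : ℕ} {r : Fin (2 ^ l - 1)} (hr : r.val = 0)
    (z : Fin (2 ^ l - 1)) :
    (hypertree l).Reachable r z ∧ (hypertree l).dist r z ≤ Nat.log 2 (z.val + 1) := by
  induction z using WellFoundedLT.induction with
  | _ z ih =>
  by_cases hz : z.val = 0
  · rw [show z = r from Fin.ext (hz.trans hr.symm), dist_self]
    exact ⟨Reachable.refl r, Nat.zero_le _⟩
  set w : Fin (2 ^ l - 1) := ⟨(z.val + 1) / 2 - 1, by omega⟩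
  have hwz : (hypertree l).Adj w z := by
    left
    simp only [w]
    omega
  obtain ⟨hrw, hdist⟩ := ih w (Fin.lt_def.mpr (by simp only [w]; omega))
  have hlog : Nat.log 2 (z.val + 1) = Nat.log 2 (w.val + 1) + 1 := by
    rw [← log_two_mul_add (by omega) (by omega : (z.val + 1) % 2 ≤ 1)]
    congr 1
    simp only [w]
    omega
  refine ⟨hrw.trans hwz.reachable, ?_⟩
  calc (hypertree l).dist r z ≤ (hypertree l).dist r w + (hypertree l).dist w z :=
        hwz.reachable.dist_triangle_right r
    _ ≤ Nat.log 2 (z.val + 1) := by rw [dist_eq_one_iff_adj.mpr hwz]; omega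

theorem hypertree_dist_le_of_val_eq_zero {l : ℕ} {r : Fin (2 ^ l - 1)} (hr : r.val = 0)
    (z : Fin (2 ^ l - 1)) : (hypertree l).dist r z ≤ l - 1 := by
  have := Nat.log_lt_of_lt_pow (b := 2) (x := l) (show z.val + 1 ≠ 0 by omega) (by omega)
  have := (hypertree_reachable_dist_le hr z).2
  omega

theorem hypertree_preconnected {l : ℕ} : (hypertree l).Preconnected := fun u v =>
  have hr : (⟨0, u.pos⟩ : Fin (2 ^ l - 1)).val = 0 := rfl
  ((hypertree_reachable_dist_le hr u).1.symm).trans (hypertree_reachable_dist_le hr v).1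

def digitBelowLead (a j : ℕ) : ℕ := a / 2 ^ (Nat.log 2 a - j) % 2

theorem digitBelowLead_two_mul_add {a ε j : ℕ} (ha : 1 ≤ a) (hε : ε ≤ 1)
    (hj : j ≤ Nat.log 2 a) : digitBelowLead (2 * a + ε) j = digitBelowLead a j := by
  unfold digitBelowLead
  rw [log_two_mul_add ha hε, show Nat.log 2 a + 1 - j = Nat.log 2 a - j + 1 by omega, pow_succ',
    ← Nat.div_div_eq_div_mul, show (2 * a + ε) / 2 = a by omega]

theorem digitBelowLead_of_horizontal {a b : ℕ} (hab : a < b) (hlog : Nat.log 2 a = Nat.log 2 b)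
    (hd : 1 ≤ Nat.log 2 a) (hdiff : b - a = 2 ^ (Nat.log 2 a - 1)) :
    digitBelowLead a 1 = 0 ∧ digitBelowLead b 1 = 1 ∧
      (2 ≤ Nat.log 2 a → digitBelowLead b 2 = digitBelowLead a 2) := by
  obtain ⟨D, hD⟩ : ∃ D, Nat.log 2 a = D + 1 := ⟨_, (Nat.sub_add_cancel hd).symm⟩
  have hlow : 2 ^ (D + 1) ≤ a := hD ▸ Nat.pow_log_le_self 2 (by rintro rfl; simp at hD)
  have hhigh : b < 2 ^ (D + 2) := by
    simpa [← hlog, hD] using Nat.lt_pow_succ_log_self one_lt_two b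
  rw [hD, Nat.add_sub_cancel] at hdiff
  rw [pow_succ] at hlow
  rw [pow_succ, pow_succ] at hhigh
  have hm : 0 < 2 ^ D := by positivity
  have ha : a / 2 ^ D = 2 := Nat.div_eq_of_lt_le (by omega) (by omega)
  have hb : b = a + 1 * 2 ^ D := by omega
  unfold digitBelowLead
  rw [← hlog, hD, Nat.add_sub_cancel]
  refine ⟨by rw [ha], by rw [hb, Nat.add_mul_div_right _ _ hm, ha], fun hD2 => ?_⟩
  obtain ⟨E, rfl⟩ : ∃ E, D = E + 1 := ⟨D - 1, by omega⟩
  rw [show E + 1 + 1 - 2 = E by omega, hb, one_mul, pow_succ,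
    Nat.add_mul_div_left _ _ (by positivity)]
  omega

def levelPotential (σ c a : ℕ) : ℤ :=
  if a ≤ 1 then 0 else
    (if digitBelowLead a 1 = σ then 1 else 0) +
      (if digitBelowLead a 2 = c then 1 else -1) * ((Nat.log 2 a : ℤ) - 1)

theorem abs_levelPotential_two_mul_add_sub (σ c : ℕ) {a ε : ℕ} (ha : 1 ≤ a) (hε : ε ≤ 1) :
    |levelPotential σ c (2 * a + ε) - levelPotential σ c a| ≤ 1 := by
  unfold levelPotential
  rw [if_neg (show ¬2 * a + ε ≤ 1 by omega), log_two_mul_add ha hε]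
  rcases ha.eq_or_lt with rfl | ha
  · simp only [Nat.log_one_right, le_refl, if_true]
    split_ifs <;> norm_num
  have hD : 1 ≤ Nat.log 2 a := Nat.log_pos one_lt_two ha
  rw [if_neg (show ¬a ≤ 1 by omega), digitBelowLead_two_mul_add (by omega) hε hD]
  rcases hD.eq_or_lt with hD1 | hD2
  · rw [← hD1]
    split_ifs <;> norm_num
  · rw [digitBelowLead_two_mul_add (by omega) hε hD2, abs_le]
    split_ifs <;> push_cast <;> constructor <;> linarith

theorem abs_levelPotential_sub_of_horizontal (σ c : ℕ) {a b : ℕ} (hab : a < b)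
    (hlog : Nat.log 2 a = Nat.log 2 b) (hd : 1 ≤ Nat.log 2 a)
    (hdiff : b - a = 2 ^ (Nat.log 2 a - 1)) :
    |levelPotential σ c b - levelPotential σ c a| ≤ 1 := by
  obtain ⟨ha1, hb1, h2⟩ := digitBelowLead_of_horizontal hab hlog hd hdiff
  have ha : 2 ≤ a :=
    (Nat.pow_le_pow_right two_pos hd).trans (Nat.pow_log_le_self 2 (by rintro rfl; simp at hd))
  unfold levelPotential
  rw [if_neg (show ¬b ≤ 1 by omega), if_neg (show ¬a ≤ 1 by omega), ← hlog, ha1, hb1]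
  rcases hd.eq_or_lt with hD1 | hD2
  · rw [← hD1]
    split_ifs <;> norm_num
  · rw [h2 hD2, abs_le]
    split_ifs <;> omega

theorem abs_levelPotential_sub_of_htAdjLbl (σ c : ℕ) {a b : ℕ} (ha : 1 ≤ a) (hb : 1 ≤ b)
    (h : htAdjLbl a b) : |levelPotential σ c b - levelPotential σ c a| ≤ 1 := by
  rcases h with (rfl | rfl | rfl | rfl) | ⟨hne, hlog, hd, hdiff⟩
  · simpa using abs_levelPotential_two_mul_add_sub σ c ha zero_le_one
  · exact abs_levelPotential_two_mul_add_sub σ c ha le_rfl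
  · rw [abs_sub_comm]
    simpa using abs_levelPotential_two_mul_add_sub σ c hb zero_le_one
  · rw [abs_sub_comm]
    exact abs_levelPotential_two_mul_add_sub σ c hb le_rfl
  · rcases hne.lt_or_gt with hab | hab
    · rw [max_eq_right hab.le, min_eq_left hab.le] at hdiff
      exact abs_levelPotential_sub_of_horizontal σ c hab hlog hd hdiff
    · rw [max_eq_left hab.le, min_eq_right hab.le, hlog] at hdiff
      rw [abs_sub_comm]
      exact abs_levelPotential_sub_of_horizontal σ c hab hlog.symm (hlog ▸ hd) hdiff

theorem levelPotential_complement_le_zero (a : ℕ) :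
    levelPotential (1 - digitBelowLead a 1) (1 - digitBelowLead a 2) a ≤ 0 := by
  have h1 : digitBelowLead a 1 < 2 := Nat.mod_lt _ two_pos
  have h2 : digitBelowLead a 2 < 2 := Nat.mod_lt _ two_pos
  have hlog : a ≤ 1 ∨ 0 < Nat.log 2 a := (le_or_gt a 1).imp_right (Nat.log_pos one_lt_two)
  unfold levelPotential
  split_ifs <;> omega

theorem levelPotential_leaf {l σ c : ℕ} (hl : 3 ≤ l) (hσ : σ ≤ 1) (hc : c ≤ 1) :
    levelPotential σ c ((4 + 2 * σ + c) * 2 ^ (l - 3)) = l - 1 := by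
  obtain ⟨m, rfl⟩ : ∃ m, l = m + 3 := ⟨l - 3, by omega⟩
  rw [Nat.add_sub_cancel]
  have hm : 0 < 2 ^ m := by positivity
  have hlog : Nat.log 2 ((4 + 2 * σ + c) * 2 ^ m) = m + 2 := by
    apply Nat.log_eq_of_pow_le_of_lt_pow
    · rw [show 2 ^ (m + 2) = 4 * 2 ^ m by ring]; nlinarith
    · rw [show 2 ^ (m + 2 + 1) = 8 * 2 ^ m by ring]; nlinarith
  have hdiv : (4 + 2 * σ + c) * 2 ^ m / 2 ^ (m + 1) = 2 + σ := by
    rw [pow_succ', Nat.mul_div_mul_right _ _ hm]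
    omega
  unfold levelPotential digitBelowLead
  rw [if_neg (by nlinarith), hlog, show m + 2 - 1 = m + 1 by omega, hdiv,
    show m + 2 - 2 = m by omega, Nat.mul_div_cancel _ hm, if_pos (by omega), if_pos (by omega)]
  push_cast
  ring

theorem exists_le_dist_hypertree {l : ℕ} (hl : 3 ≤ l) (w : Fin (2 ^ l - 1)) :
    ∃ t, l - 1 ≤ (hypertree l).dist w t := by
  set σ := 1 - digitBelowLead (w.val + 1) 1
  set c := 1 - digitBelowLead (w.val + 1) 2
  set τ := (4 + 2 * σ + c) * 2 ^ (l - 3)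
  have hσ : σ ≤ 1 := Nat.sub_le _ _
  have hc : c ≤ 1 := Nat.sub_le _ _
  have hτ : 4 ≤ τ ∧ τ < 2 ^ l := by
    have : 2 ^ l = 8 * 2 ^ (l - 3) := by rw [← Nat.sub_add_cancel hl, pow_add]; simp [mul_comm]
    have : 0 < 2 ^ (l - 3) := by positivity
    constructor <;> simp only [τ] <;> nlinarith
  let t : Fin (2 ^ l - 1) := ⟨τ - 1, by omega⟩
  let φ : Fin (2 ^ l - 1) → ℤ := fun x => levelPotential σ c (x.val + 1)
  have hφ : ∀ x y, (hypertree l).Adj x y → φ y ≤ φ x + 1 := fun x y h => by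
    linarith [(abs_le.mp (abs_levelPotential_sub_of_htAdjLbl σ c (by omega) (by omega) h)).2]
  have hφt : φ t = l - 1 := by
    simp only [φ, t, Nat.sub_add_cancel (by omega : 1 ≤ τ)]
    exact levelPotential_leaf hl hσ hc
  have hφw : φ w ≤ 0 := levelPotential_complement_le_zero _
  have := (hypertree_preconnected w t).le_add_dist_of_adj hφ
  exact ⟨t, by omega⟩

/-- Moves the last binary digit of `a` to just below its leading one, so that the labels `2y`
and `2y + 1` land on the two ends of a horizontal edge. -/
def pairLabel (a : ℕ) : ℕ :=
  if a ≤ 1 then a else a / 2 + 2 ^ Nat.log 2 (a / 2) * (1 + a % 2)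

theorem pairLabel_two_mul_add {y ε : ℕ} (hy : 1 ≤ y) (hε : ε ≤ 1) :
    pairLabel (2 * y + ε) = y + 2 ^ Nat.log 2 y * (1 + ε) := by
  rw [pairLabel, if_neg (by omega), show (2 * y + ε) / 2 = y by omega,
    show (2 * y + ε) % 2 = ε by omega]

theorem log_add_two_pow_log_mul {y ε : ℕ} (hy : 1 ≤ y) (hε : ε ≤ 1) :
    Nat.log 2 (y + 2 ^ Nat.log 2 y * (1 + ε)) = Nat.log 2 y + 1 := by
  have hlow : 2 ^ Nat.log 2 y ≤ y := Nat.pow_log_le_self 2 (by omega)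
  have hhigh : y < 2 ^ (Nat.log 2 y + 1) := Nat.lt_pow_succ_log_self one_lt_two y
  rw [pow_succ] at hhigh
  apply Nat.log_eq_of_pow_le_of_lt_pow
  · rw [pow_succ]
    interval_cases ε <;> omega
  · rw [pow_succ, pow_succ]
    interval_cases ε <;> omega

theorem log_pairLabel {a : ℕ} (ha : 1 ≤ a) : Nat.log 2 (pairLabel a) = Nat.log 2 a := by
  rcases ha.eq_or_lt with rfl | ha
  · rfl
  obtain ⟨y, ε, hε, rfl⟩ : ∃ y ε, ε ≤ 1 ∧ a = 2 * y + ε := ⟨a / 2, a % 2, by omega, by omega⟩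
  rw [pairLabel_two_mul_add (by omega) hε, log_add_two_pow_log_mul (by omega) hε,
    log_two_mul_add (by omega) hε]

theorem one_le_pairLabel {a : ℕ} (ha : 1 ≤ a) : 1 ≤ pairLabel a := by
  unfold pairLabel
  split_ifs
  · exact ha
  · have : 0 < 2 ^ Nat.log 2 (a / 2) * (1 + a % 2) := by positivity
    omega

theorem pairLabel_lt_two_pow {a l : ℕ} (ha : 1 ≤ a) (hal : a < 2 ^ l) : pairLabel a < 2 ^ l := by
  have hlog := Nat.log_lt_of_lt_pow (by omega) hal
  calc pairLabel a < 2 ^ (Nat.log 2 (pairLabel a) + 1) := Nat.lt_pow_succ_log_self one_lt_two _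
    _ ≤ 2 ^ l := Nat.pow_le_pow_right two_pos (by rw [log_pairLabel ha]; omega)

theorem pairLabel_inj {a b : ℕ} (ha : 1 ≤ a) (hb : 1 ≤ b) (h : pairLabel a = pairLabel b) :
    a = b := by
  have hlog : Nat.log 2 a = Nat.log 2 b := by rw [← log_pairLabel ha, ← log_pairLabel hb, h]
  have hsmall : ∀ n, 1 ≤ n → (Nat.log 2 n = 0 ↔ n = 1) := fun n hn => by
    rw [Nat.log_eq_zero_iff]
    omega
  rcases ha.eq_or_lt with rfl | ha
  · exact ((hsmall b hb).mp (hlog ▸ Nat.log_one_right 2)).symm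
  rcases hb.eq_or_lt with rfl | hb
  · exact (hsmall a (by omega)).mp hlog
  obtain ⟨y, ε, hε, rfl⟩ : ∃ y ε, ε ≤ 1 ∧ a = 2 * y + ε := ⟨a / 2, a % 2, by omega, by omega⟩
  obtain ⟨y', ε', hε', rfl⟩ : ∃ y ε, ε ≤ 1 ∧ b = 2 * y + ε := ⟨b / 2, b % 2, by omega, by omega⟩
  rw [log_two_mul_add (by omega) hε, log_two_mul_add (by omega) hε', Nat.add_right_cancel_iff]
    at hlog
  rw [pairLabel_two_mul_add (by omega) hε, pairLabel_two_mul_add (by omega) hε', ← hlog] at h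
  have hy_low : 2 ^ Nat.log 2 y ≤ y := Nat.pow_log_le_self 2 (by omega)
  have hy'_low : 2 ^ Nat.log 2 y ≤ y' := hlog ▸ Nat.pow_log_le_self 2 (by omega)
  have hy_high : y < 2 ^ Nat.log 2 y * 2 := pow_succ 2 _ ▸ Nat.lt_pow_succ_log_self one_lt_two y
  have hy'_high : y' < 2 ^ Nat.log 2 y * 2 :=
    pow_succ 2 _ ▸ hlog ▸ Nat.lt_pow_succ_log_self one_lt_two y'
  interval_cases ε <;> interval_cases ε' <;> omega

theorem htAdjLbl_pairLabel {y : ℕ} (hy : 1 ≤ y) :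
    htAdjLbl (pairLabel (2 * y)) (pairLabel (2 * y + 1)) := by
  have h0 := pairLabel_two_mul_add hy zero_le_one
  have h1 := pairLabel_two_mul_add hy le_rfl
  have hlog0 := log_add_two_pow_log_mul hy zero_le_one
  have hlog1 := log_add_two_pow_log_mul hy le_rfl
  simp only [add_zero] at h0 hlog0
  right
  rw [h0, h1, hlog0, hlog1, Nat.add_sub_cancel]
  have := Nat.one_le_two_pow (n := Nat.log 2 y)
  refine ⟨by omega, rfl, by omega, ?_⟩
  rw [max_eq_right (by omega), min_eq_left (by omega)]
  omega

theorem pairLabel_val_add_one_sub_one_lt {l : ℕ} (x : Fin (2 ^ l - 1)) :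
    pairLabel (x.val + 1) - 1 < 2 ^ l - 1 := by
  have := x.isLt
  have := pairLabel_lt_two_pow (l := l) (Nat.le_add_left 1 x.val) (by omega)
  omega

noncomputable def hypertreePairing (l : ℕ) : Equiv.Perm (Fin (2 ^ l - 1)) :=
  Equiv.ofBijective (fun x => ⟨pairLabel (x.val + 1) - 1, pairLabel_val_add_one_sub_one_lt x⟩) <|
    Finite.injective_iff_bijective.mp fun x y h => by
      have := one_le_pairLabel (Nat.le_add_left 1 x.val)
      have := one_le_pairLabel (Nat.le_add_left 1 y.val)
      have hxy : pairLabel (x.val + 1) - 1 = pairLabel (y.val + 1) - 1 := congrArg Fin.val h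
      have := pairLabel_inj (a := x.val + 1) (b := y.val + 1) (by omega) (by omega) (by omega)
      exact Fin.ext (by omega)

theorem hypertreePairing_val_add_one {l : ℕ} (x : Fin (2 ^ l - 1)) :
    (hypertreePairing l x).val + 1 = pairLabel (x.val + 1) :=
  Nat.sub_add_cancel (one_le_pairLabel (Nat.le_add_left 1 x.val))

theorem hypertree_adj_hypertreePairing {l : ℕ} {x y : Fin (2 ^ l - 1)} (hx : x.val % 2 = 1)
    (hy : y.val = x.val + 1) : (hypertree l).Adj (hypertreePairing l x) (hypertreePairing l y) := by
  change htAdjLbl _ _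
  rw [hypertreePairing_val_add_one, hypertreePairing_val_add_one, hy,
    show x.val + 1 = 2 * ((x.val + 1) / 2) by omega]
  exact htAdjLbl_pairLabel (by omega)

theorem exists_equiv_friendshipGraph_dist_le {k l : ℕ} (hk : 2 * k + 1 = 2 ^ l - 1) :
    ∃ f : Fin (2 * k + 1) ≃ Fin (2 ^ l - 1), ∀ u v, (friendshipGraph k).Adj u v →
      (hypertree l).dist (f u) (f v) ≤ l - 1 := by
  refine ⟨(finCongr hk).trans (hypertreePairing l), ?_⟩
  have hroot : ∀ x : Fin (2 * k + 1), x.val = 0 →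
      ((finCongr hk).trans (hypertreePairing l) x).val = 0 := fun x hx => by
    simp [hypertreePairing, hx, pairLabel]
  have hpair : ∀ {x y : Fin (2 * k + 1)}, x.val % 2 = 1 → y.val = x.val + 1 →
      (hypertree l).dist ((finCongr hk).trans (hypertreePairing l) x)
        ((finCongr hk).trans (hypertreePairing l) y) ≤ l - 1 := by
    intro x y hx hy
    have hl : 2 ≤ l := by
      by_contra! hl
      have := y.isLt
      have := Nat.pow_le_pow_right two_pos (Nat.le_of_lt_succ hl)
      omega
    simp only [Equiv.trans_apply]
    rw [dist_eq_one_iff_adj.mpr (hypertree_adj_hypertreePairing (x := finCongr hk x)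
      (y := finCongr hk y) (by simpa using hx) (by simpa using hy))]
    omega
  rintro u v ⟨-, hu | hv | ⟨huv, hu⟩ | ⟨hvu, hv⟩⟩
  · exact hypertree_dist_le_of_val_eq_zero (hroot u hu) _
  · rw [SimpleGraph.dist_comm]
    exact hypertree_dist_le_of_val_eq_zero (hroot v hv) _
  · exact hpair hu huv
  · rw [SimpleGraph.dist_comm]
    exact hpair hv hvu

theorem dil_friendship_hypertree (l n k : ℕ) (hl : 3 ≤ l) (hn : n = 2 ^ l - 1)
    (hk : k = (n - 1) / 2) :
    (∀ f : Fin (2 * k + 1) ≃ Fin (2 ^ l - 1), ∃ u v : Fin (2 * k + 1),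
      (friendshipGraph k).Adj u v ∧ l - 1 ≤ (hypertree l).dist (f u) (f v)) ∧
    (∃ f : Fin (2 * k + 1) ≃ Fin (2 ^ l - 1), ∀ u v : Fin (2 * k + 1),
      (friendshipGraph k).Adj u v → (hypertree l).dist (f u) (f v) ≤ l - 1) := by
  have hkl : 2 * k + 1 = 2 ^ l - 1 := by
    have : 2 ^ l = 2 * 2 ^ (l - 1) := by rw [← pow_succ']; congr; omega
    have := Nat.one_le_two_pow (n := l - 1)
    omega
  refine ⟨fun f => ?_, exists_equiv_friendshipGraph_dist_le hkl⟩
  obtain ⟨t, ht⟩ := exists_le_dist_hypertree hl (f 0)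
  refine ⟨0, f.symm t, ⟨fun h => ?_, Or.inl rfl⟩, by rwa [f.apply_symm_apply]⟩
  rw [h, f.apply_symm_apply, SimpleGraph.dist_self] at ht
  omega
end

section
/- Let l ≥ 3 and n = 2^l − 1. Then dil(S_n, ST(l)) = l − 1: every bijection from the vertices of the star S_n to the vertices of the sibling tree ST(l) has some edge of S_n whose endpoint images are at distance at least l − 1 in ST(l), and there exists a bijection under which every edge of S_n maps to a pair of vertices at distance at most l − 1 in ST(l). -/
open SimpleGraph

/-- Star graph `K_{1,n-1}` on `Fin n`, centre `0`. -/
def starGraphFin (n : ℕ) : SimpleGraph (Fin n) where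
  Adj x y := x ≠ y ∧ (x.val = 0 ∨ y.val = 0)
  symm := ⟨by rintro x y ⟨h1, h2⟩; exact ⟨h1.symm, by tauto⟩⟩
  loopless := ⟨by rintro x ⟨h1, -⟩; exact h1 rfl⟩

/-- Adjacency of sibling-tree labels: binary tree edges plus edges between the two
children `2x` and `2x+1` (an even label `≥ 2` and its successor). -/
def stAdjLbl (a b : ℕ) : Prop :=
  (b = 2 * a ∨ b = 2 * a + 1 ∨ a = 2 * b ∨ a = 2 * b + 1) ∨
  (b = a + 1 ∧ a % 2 = 0 ∧ 2 ≤ a) ∨ (a = b + 1 ∧ b % 2 = 0 ∧ 2 ≤ b)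

/-- The sibling tree `ST(l)` on `Fin (2^l - 1)`; vertex `x` has label `x+1`. -/
def siblingTree (l : ℕ) : SimpleGraph (Fin (2 ^ l - 1)) where
  Adj x y := stAdjLbl (x.val + 1) (y.val + 1)
  symm := ⟨by rintro x y h; unfold stAdjLbl at *; tauto⟩
  loopless := ⟨by rintro x h; unfold stAdjLbl at h; omega⟩

/-!
Whatever vertex `w` the centre of the star is sent to, some vertex of `ST(l)` is at distance
at least `l - 1` from `w`: the leftmost and rightmost leaves are at distance `2l - 3`, so by
the triangle inequality one of them is that far from `w`. The lower bound `2l - 3` comes from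
a potential that changes by at most one along every edge: depth minus one on the left subtree
of the root, minus the depth elsewhere (the sibling edge `2 — 3` is the only place where the
two regimes meet). Sending the centre to the root gives dilation `l - 1`, the depth of `ST(l)`.
-/

namespace SimpleGraph

variable {V : Type*} {G : SimpleGraph V}

theorem Walk.abs_sub_le_length (f : V → ℤ) (hf : ∀ x y, G.Adj x y → |f x - f y| ≤ 1)
    {u v : V} (p : G.Walk u v) : |f u - f v| ≤ p.length := by
  induction p with
  | nil => simp
  | @cons x y z h p ih =>
    calc |f x - f z| ≤ |f x - f y| + |f y - f z| := abs_sub_le _ _ _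
      _ ≤ 1 + p.length := add_le_add (hf x y h) ih
      _ = (p.cons h).length := by simp [add_comm]

theorem Reachable.abs_sub_le_dist (f : V → ℤ) (hf : ∀ x y, G.Adj x y → |f x - f y| ≤ 1)
    {u v : V} (h : G.Reachable u v) : |f u - f v| ≤ G.dist u v := by
  obtain ⟨p, hp⟩ := h.exists_walk_length_eq_dist
  exact hp ▸ p.abs_sub_le_length f hf

theorem Reachable.le_dist_or_le_dist {a b w : V} {k : ℕ} (h : G.Reachable a w)
    (hab : 2 * k ≤ G.dist a b + 1) : k ≤ G.dist w a ∨ k ≤ G.dist w b := by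
  have := h.dist_triangle_left b
  rw [G.dist_comm (u := a) (v := w)] at this
  omega

end SimpleGraph

section Star

variable {V : Type*} (H : SimpleGraph V) {n : ℕ} (hn : 0 < n) (f : Fin n ≃ V)

theorem starGraphFin_exists_adj_le_dist {k : ℕ} (hk : 0 < k) {t : V}
    (ht : k ≤ H.dist (f ⟨0, hn⟩) t) :
    ∃ u v : Fin n, (starGraphFin n).Adj u v ∧ k ≤ H.dist (f u) (f v) := by
  refine ⟨⟨0, hn⟩, f.symm t, ⟨fun h => ?_, Or.inl rfl⟩, by simpa using ht⟩
  rw [h, f.apply_symm_apply, dist_self] at ht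
  omega

theorem starGraphFin_dist_le {k : ℕ} (hf : ∀ x, H.dist (f ⟨0, hn⟩) x ≤ k) :
    ∀ u v : Fin n, (starGraphFin n).Adj u v → H.dist (f u) (f v) ≤ k := by
  rintro u v ⟨-, hu | hv⟩
  · exact (Fin.ext hu : u = ⟨0, hn⟩) ▸ hf (f v)
  · exact (Fin.ext hv : v = ⟨0, hn⟩) ▸ H.dist_comm ▸ hf (f u)

end Star

/-- A label `m` at depth `d = log₂ m` lies in the left subtree of the root iff
`2m < 3 · 2^d`. -/
def siblingPotential (m : ℕ) : ℤ :=
  if 2 * m < 3 * 2 ^ Nat.log 2 m then Nat.log 2 m - 1 else -Nat.log 2 m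

theorem abs_siblingPotential_children_sub {c : ℕ} (hc : c ≠ 0) :
    |siblingPotential (2 * c) - siblingPotential c| ≤ 1 ∧
      |siblingPotential (2 * c + 1) - siblingPotential c| ≤ 1 ∧
      |siblingPotential (2 * c + 1) - siblingPotential (2 * c)| ≤ 1 := by
  have hlow := Nat.pow_log_le_self 2 hc
  have hup := Nat.lt_pow_succ_log_self one_lt_two c
  have hlog₀ : Nat.log 2 (2 * c) = Nat.log 2 c + 1 := by
    rw [mul_comm]; exact Nat.log_mul_base one_lt_two hc
  have hlog₁ : Nat.log 2 (2 * c + 1) = Nat.log 2 c + 1 :=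
    Nat.log_eq_of_pow_le_of_lt_pow (by rw [pow_succ]; omega)
      (by rw [pow_succ, pow_succ] at *; omega)
  have hpar : Nat.log 2 c = 0 ∧ 2 ^ Nat.log 2 c = 1 ∨ 2 ^ Nat.log 2 c % 2 = 0 := by
    rcases Nat.eq_zero_or_pos (Nat.log 2 c) with h | h
    · simp [h]
    · right; rw [← Nat.succ_pred_eq_of_pos h, pow_succ]; omega
  simp only [siblingPotential, hlog₀, hlog₁, pow_succ] at *
  split_ifs <;> (simp only [abs_le]; omega)

theorem abs_siblingPotential_sub_le_one {a b : ℕ} (ha : a ≠ 0) (hb : b ≠ 0)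
    (h : stAdjLbl a b) :
    |siblingPotential a - siblingPotential b| ≤ 1 := by
  rcases h with (rfl | rfl | rfl | rfl) | ⟨rfl, he, -⟩ | ⟨rfl, he, -⟩
  · exact abs_sub_comm (siblingPotential a) _ ▸ (abs_siblingPotential_children_sub ha).1
  · exact abs_sub_comm (siblingPotential a) _ ▸ (abs_siblingPotential_children_sub ha).2.1
  · exact (abs_siblingPotential_children_sub hb).1
  · exact (abs_siblingPotential_children_sub hb).2.1
  · obtain ⟨c, rfl⟩ : ∃ c, a = 2 * c := ⟨a / 2, by omega⟩
    exact abs_sub_comm (siblingPotential _) _ ▸ (abs_siblingPotential_children_sub (by omega)).2.2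
  · obtain ⟨c, rfl⟩ : ∃ c, b = 2 * c := ⟨b / 2, by omega⟩
    exact (abs_siblingPotential_children_sub (by omega)).2.2

theorem siblingPotential_two_pow (k : ℕ) : siblingPotential (2 ^ k) = k - 1 := by
  have := Nat.one_le_two_pow (n := k)
  rw [siblingPotential, Nat.log_pow one_lt_two, if_pos (by omega)]

theorem siblingPotential_two_pow_succ_sub_one {k : ℕ} (hk : k ≠ 0) :
    siblingPotential (2 ^ (k + 1) - 1) = -k := by
  have hlog : Nat.log 2 (2 ^ (k + 1) - 1) = k :=
    Nat.log_eq_of_pow_le_of_lt_pow (by rw [pow_succ]; have := Nat.one_le_two_pow (n := k); omega)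
      (by have := Nat.one_le_two_pow (n := k + 1); omega)
  have h2 : 2 ≤ 2 ^ k := Nat.le_self_pow hk 2
  rw [siblingPotential, hlog, if_neg (by rw [pow_succ]; omega)]

section SiblingTree

variable {l : ℕ}

theorem siblingTree_exists_walk_root (h0 : 0 < 2 ^ l - 1) (x : Fin (2 ^ l - 1)) :
    ∃ p : (siblingTree l).Walk x ⟨0, h0⟩, p.length = Nat.log 2 (x.val + 1) := by
  induction' hm : x.val using Nat.strong_induction_on with m ih generalizing x
  rcases Nat.eq_zero_or_pos m with rfl | hpos
  · obtain rfl : x = ⟨0, h0⟩ := Fin.ext hm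
    exact ⟨.nil, by simp⟩
  · have hx := x.isLt
    obtain ⟨p, hp⟩ := ih ((m + 1) / 2 - 1) (by omega) ⟨(m + 1) / 2 - 1, by omega⟩ rfl
    have hadj : (siblingTree l).Adj x ⟨(m + 1) / 2 - 1, by omega⟩ := by
      change stAdjLbl (x.val + 1) ((m + 1) / 2 - 1 + 1); unfold stAdjLbl; omega
    refine ⟨.cons hadj p, ?_⟩
    rw [Walk.length_cons, hp, Nat.sub_add_cancel (by omega), Nat.log_div_base,
      Nat.sub_add_cancel (Nat.log_pos one_lt_two (by omega))]

theorem siblingTree_connected (h0 : 0 < 2 ^ l - 1) : (siblingTree l).Connected := by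
  have hroot (x) : (siblingTree l).Reachable x ⟨0, h0⟩ :=
    (siblingTree_exists_walk_root h0 x).elim fun p _ => ⟨p⟩
  exact (connected_iff _).2 ⟨fun x y => (hroot x).trans (hroot y).symm, ⟨⟨0, h0⟩⟩⟩

theorem siblingTree_dist_root_le (h0 : 0 < 2 ^ l - 1) (x : Fin (2 ^ l - 1)) :
    (siblingTree l).dist ⟨0, h0⟩ x ≤ l - 1 := by
  obtain ⟨p, hp⟩ := siblingTree_exists_walk_root h0 x
  have hlog : Nat.log 2 (x.val + 1) < l := Nat.log_lt_of_lt_pow (by omega) (by omega)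
  rw [dist_comm]
  exact (dist_le p).trans (by omega)

theorem siblingTree_exists_le_dist (hl : 2 ≤ l) :
    ∃ a b : Fin (2 ^ l - 1), 2 * l - 3 ≤ (siblingTree l).dist a b := by
  obtain ⟨k, rfl⟩ : ∃ k, l = k + 1 := ⟨l - 1, by omega⟩
  have hk : 2 ≤ 2 ^ k := Nat.le_self_pow (by omega) 2
  have hk' : 2 ^ (k + 1) = 2 * 2 ^ k := pow_succ' 2 k
  have h0 : 0 < 2 ^ (k + 1) - 1 := by omega
  let a : Fin (2 ^ (k + 1) - 1) := ⟨2 ^ k - 1, by omega⟩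
  let b : Fin (2 ^ (k + 1) - 1) := ⟨2 ^ (k + 1) - 2, by omega⟩
  refine ⟨a, b, ?_⟩
  have hpot := ((siblingTree_connected h0).preconnected a b).abs_sub_le_dist
    (fun x : Fin (2 ^ (k + 1) - 1) => siblingPotential (x.val + 1))
    (fun x y h => abs_siblingPotential_sub_le_one (by omega) (by omega) h)
  dsimp only [a, b] at hpot ⊢
  rw [Nat.sub_add_cancel (by omega), show 2 ^ (k + 1) - 2 + 1 = 2 ^ (k + 1) - 1 by omega,
    siblingPotential_two_pow, siblingPotential_two_pow_succ_sub_one (by omega),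
    abs_of_nonneg (by omega)] at hpot
  omega

end SiblingTree

theorem dil_star_siblingTree (l n : ℕ) (hl : 3 ≤ l) (hn : n = 2 ^ l - 1) :
    (∀ f : Fin n ≃ Fin (2 ^ l - 1), ∃ u v : Fin n, (starGraphFin n).Adj u v ∧
      l - 1 ≤ (siblingTree l).dist (f u) (f v)) ∧
    (∃ f : Fin n ≃ Fin (2 ^ l - 1), ∀ u v : Fin n, (starGraphFin n).Adj u v →
      (siblingTree l).dist (f u) (f v) ≤ l - 1) := by
  subst hn
  have h0 : 0 < 2 ^ l - 1 := by have := Nat.one_lt_two_pow (n := l) (by omega); omega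
  refine ⟨fun f => ?_,
    ⟨Equiv.refl _, starGraphFin_dist_le _ h0 _ (siblingTree_dist_root_le h0)⟩⟩
  obtain ⟨a, b, hab⟩ := siblingTree_exists_le_dist (by omega : 2 ≤ l)
  obtain h | h := ((siblingTree_connected h0).preconnected a (f ⟨0, h0⟩)).le_dist_or_le_dist
    (b := b) (k := l - 1) (by omega)
  exacts [starGraphFin_exists_adj_le_dist _ h0 f (by omega) h,
    starGraphFin_exists_adj_le_dist _ h0 f (by omega) h]
end
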